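/- Let G be a linearly ordered abelian group with finite spines, p a prime, {H_i}_{i<κ} a family of convex subgroups with H_i ⊊ H_j whenever i < j, and {e_i}_{i<κ} ⊆ ℕ ∪ {0, ∞}, with the convention H + p^∞G = H. Assume that for every i_0 < κ the index [⋂_{i<κ, i≠i_0}(H_i + p^{e_i}G) : ⋂_{i<κ}(H_i + p^{e_i}G)] is infinite. Then κ ≤ k_p + 1, where k_p is the largest n for which there exist convex subgroups K_0 ⊊ K_1 ⊊ … ⊊ K_{n-1} ⊊ K_n = G with [K_{i+1} : K_i + pK_{i+1}] infinite for every i < n; in particular κ is finite. -/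

import Mathlib

/-- `nH = {n • h : h ∈ H}` as a subgroup. -/
def smulSub {G : Type*} [AddCommGroup G] (n : ℕ) (H : AddSubgroup G) : AddSubgroup G :=
  AddSubgroup.map (n • AddMonoidHom.id G) H

/-- A subgroup `H` of a linearly ordered abelian group is convex if
`0 ≤ g ≤ h` and `h ∈ H` imply `g ∈ H`. -/
def IsConvexSubgroup {G : Type*} [AddCommGroup G] [LinearOrder G] [IsOrderedAddMonoid G] (H : AddSubgroup G) : Prop :=
  ∀ g h : G, 0 ≤ g → g ≤ h → h ∈ H → g ∈ H

/-- `H_n(a)`: the largest convex subgroup `H` of `G` with `a ∉ H + nG` (equivalently the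
union, i.e. supremum, of all such subgroups); it is the trivial subgroup when `a ∈ nG`. -/
def Hsub {G : Type*} [AddCommGroup G] [LinearOrder G] [IsOrderedAddMonoid G] (n : ℕ) (a : G) : AddSubgroup G :=
  sSup {H : AddSubgroup G | IsConvexSubgroup H ∧ a ∉ H ⊔ smulSub n ⊤}

/-- `H + p^e G`, for an exponent `e ∈ ℕ ∪ {∞}`, with the convention `H + p^∞ G = H`. -/
def pPowSup {G : Type*} [AddCommGroup G] (p : ℕ) (H : AddSubgroup G) : ℕ∞ → AddSubgroup G
  | ⊤ => H
  | (m : ℕ) => H ⊔ smulSub (p ^ m) ⊤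

/-- The set of `n : ℕ` for which there are convex subgroups
`K 0 ⊊ K 1 ⊊ … ⊊ K (n-1) ⊊ K n = G` with `[K (i+1) : K i + p K (i+1)]` infinite for all
`i < n`; `k_p` is the largest element of this set. -/
def kpWitness (G : Type*) [AddCommGroup G] [LinearOrder G] [IsOrderedAddMonoid G] (p : ℕ) : Set ℕ :=
  {n : ℕ | ∃ K : ℕ → AddSubgroup G,
    (∀ i ≤ n, IsConvexSubgroup (K i)) ∧ (∀ i j : ℕ, i < j → j ≤ n → K i < K j) ∧
      K n = ⊤ ∧ ∀ i < n, (K i ⊔ smulSub p (K (i + 1))).relIndex (K (i + 1)) = 0}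

/-!
Write `A_i = H_i + p^{e_i} G`. The index at `b` is `1` as soon as another `A_a` lies in `A_b`,
which happens when `a < b` and `e_b ≤ e_a`; so `e` is strictly increasing. For `t < s` and any
`K ⊇ H_s` this makes `e_t = m` finite with `⋂_{i ≠ t} A_i ≤ A_s ≤ K + p^m G`, so
`[K + p^m G : H_t + p^m G]` is infinite, and then so is `[K : H_t + pK]`: finiteness of
`[K : H + pK]` propagates to `[K : H + p^m K]` through the layers `p^j K`. Hence any `k + 1`
members of the family, topped by `G`, form a chain witnessing `k ≤ k_p`. That `k_p` exists comes
from the finite spine: a witnessing chain `K_0 ⊊ ⋯ ⊊ K_n` yields elements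
`a_i ∈ K_{i+1} \ (K_i + pG)`, and the subgroups `H_p(a_i)` are pairwise distinct since
`K_i ≤ H_p(a_i) ∌ a_i`.
-/

open AddSubgroup

lemma not_le_of_relIndex_iInf_ne_eq_zero {G ι : Type*} [AddGroup G] {A : ι → AddSubgroup G}
    {a b : ι}
    (h : (⨅ i, A i).relIndex (⨅ (i) (_ : i ≠ b), A i) = 0) (hab : a ≠ b) :
    ¬ A a ≤ A b := by
  intro hle
  have : ⨅ i, A i = ⨅ (i) (_ : i ≠ b), A i := by
    rw [iInf_split_single A b]
    exact inf_eq_right.2 ((iInf₂_le a hab).trans hle)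
  rw [this, AddSubgroup.relIndex_self] at h
  exact one_ne_zero h

section AddCommGroup

variable {G : Type*} [AddCommGroup G]

lemma mem_smulSub {n : ℕ} {H : AddSubgroup G} {x : G} :
    x ∈ smulSub n H ↔ ∃ h ∈ H, n • h = x := by
  simp [smulSub]

lemma nsmul_mem_smulSub (n : ℕ) {H : AddSubgroup G} {h : G} (hh : h ∈ H) :
    n • h ∈ smulSub n H :=
  mem_smulSub.2 ⟨h, hh, rfl⟩

lemma smulSub_one (H : AddSubgroup G) : smulSub 1 H = H := by
  ext x
  simp [mem_smulSub]

lemma smulSub_le_self (n : ℕ) (H : AddSubgroup G) : smulSub n H ≤ H := by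
  intro x hx
  obtain ⟨h, hh, rfl⟩ := mem_smulSub.1 hx
  exact H.nsmul_mem hh n

lemma smulSub_mono (n : ℕ) {H K : AddSubgroup G} (hHK : H ≤ K) :
    smulSub n H ≤ smulSub n K := by
  intro x hx
  obtain ⟨h, hh, rfl⟩ := mem_smulSub.1 hx
  exact nsmul_mem_smulSub n (hHK hh)

lemma smulSub_le_of_dvd {a b : ℕ} (hab : a ∣ b) (H : AddSubgroup G) :
    smulSub b H ≤ smulSub a H := by
  obtain ⟨c, rfl⟩ := hab
  intro x hx
  obtain ⟨h, hh, rfl⟩ := mem_smulSub.1 hx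
  simpa only [mul_smul] using nsmul_mem_smulSub a (H.nsmul_mem hh c)

lemma pPowSup_mono {p : ℕ} {H K : AddSubgroup G} (hHK : H ≤ K) {e f : ℕ∞} (hfe : f ≤ e) :
    pPowSup p H e ≤ pPowSup p K f := by
  cases f with
  | top => rwa [top_le_iff.1 hfe]
  | coe m =>
    cases e with
    | top => exact hHK.trans le_sup_left
    | coe n => exact sup_le_sup hHK (smulSub_le_of_dvd (pow_dvd_pow p (mod_cast hfe)) ⊤)

lemma relIndex_sup_of_le {L N : AddSubgroup G} (K : AddSubgroup G) (hNL : N ≤ L) :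
    L.relIndex (K ⊔ N) = L.relIndex K := by
  set π := QuotientAddGroup.mk' N
  calc L.relIndex (K ⊔ N) = (L ⊔ π.ker).relIndex (K ⊔ π.ker) := by
        rw [QuotientAddGroup.ker_mk', sup_of_le_left hNL]
    _ = (L.map π).relIndex (K.map π) := (relIndex_map_map π L K).symm
    _ = ((L.map π).comap π).relIndex K := (relIndex_comap _ π K).symm
    _ = L.relIndex K := by rw [comap_map_eq, QuotientAddGroup.ker_mk', sup_of_le_left hNL]

/-- Multiplication by `a` maps `K / (H + bK)` onto `(H + aK) / (H + abK)`. -/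
lemma relIndex_sup_smulSub_mul_ne_zero {H K : AddSubgroup G} (hHK : H ≤ K) {a b : ℕ}
    (ha : (H ⊔ smulSub a K).relIndex K ≠ 0) (hb : (H ⊔ smulSub b K).relIndex K ≠ 0) :
    (H ⊔ smulSub (a * b) K).relIndex K ≠ 0 := by
  have hle : H ⊔ smulSub (a * b) K ≤ H ⊔ smulSub a K :=
    sup_le_sup_left (smulSub_le_of_dvd (dvd_mul_right a b) K) H
  rw [← relIndex_mul_relIndex _ _ _ hle (sup_le hHK (smulSub_le_self a K))]
  refine mul_ne_zero ?_ ha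
  have hcomap :
      H ⊔ smulSub b K ≤ (H ⊔ smulSub (a * b) K).comap (a • AddMonoidHom.id G) := by
    refine sup_le (fun h hh => mem_sup_left (H.nsmul_mem hh a)) ?_
    intro x hx
    obtain ⟨k, hk, rfl⟩ := mem_smulSub.1 hx
    exact mem_sup_right (by simpa [mul_smul] using nsmul_mem_smulSub (a * b) hk)
  rw [sup_comm H (smulSub a K), relIndex_sup_of_le _ le_sup_left,
    show smulSub a K = K.map (a • AddMonoidHom.id G) from rfl, ← relIndex_comap]
  exact ne_zero_of_dvd_ne_zero hb (relIndex_dvd_of_le_left K hcomap)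

lemma relIndex_sup_smulSub_pow_ne_zero {H K : AddSubgroup G} (hHK : H ≤ K) {p : ℕ}
    (hp : (H ⊔ smulSub p K).relIndex K ≠ 0) (m : ℕ) :
    (H ⊔ smulSub (p ^ m) K).relIndex K ≠ 0 := by
  induction m with
  | zero => simp [smulSub_one, sup_of_le_right hHK]
  | succ m ih => exact pow_succ p m ▸ relIndex_sup_smulSub_mul_ne_zero hHK ih hp

lemma relIndex_sup_smulSub_top_ne_zero {H K : AddSubgroup G} {n : ℕ}
    (h : (H ⊔ smulSub n K).relIndex K ≠ 0) :
    (H ⊔ smulSub n ⊤).relIndex (K ⊔ smulSub n ⊤) ≠ 0 := by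
  rw [relIndex_sup_of_le K le_sup_right]
  exact ne_zero_of_dvd_ne_zero h
    (relIndex_dvd_of_le_left K (sup_le_sup_left (smulSub_mono n le_top) H))

variable {ι : Type*} [Preorder ι] {p : ℕ} {H : ι → AddSubgroup G} {e : ι → ℕ∞}

lemma relIndex_sup_smulSub_eq_zero_of_lt (hH : Monotone H)
    (hinf : ∀ i₀ : ι, (⨅ i, pPowSup p (H i) (e i)).relIndex
      (⨅ (i) (_ : i ≠ i₀), pPowSup p (H i) (e i)) = 0)
    {t s : ι} (hts : t < s) {K : AddSubgroup G} (hsK : H s ≤ K) :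
    (H t ⊔ smulSub p K).relIndex K = 0 := by
  have hets : e t < e s := lt_of_not_ge fun hle =>
    not_le_of_relIndex_iInf_ne_eq_zero (hinf s) hts.ne (pPowSup_mono (hH hts.le) hle)
  obtain ⟨m, hm⟩ := ENat.ne_top_iff_exists.1 hets.ne_top
  have hAt : (H t ⊔ smulSub (p ^ m) ⊤).relIndex
      (⨅ (i) (_ : i ≠ t), pPowSup p (H i) (e i)) = 0 := by
    have := hinf t
    rwa [iInf_split_single _ t, inf_relIndex_right, ← hm] at this
  have hrest : ⨅ (i) (_ : i ≠ t), pPowSup p (H i) (e i) ≤ K ⊔ smulSub (p ^ m) ⊤ :=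
    (iInf₂_le s hts.ne').trans (pPowSup_mono hsK (hm ▸ hets.le) : _ ≤ pPowSup p K m)
  by_contra hK
  exact relIndex_sup_smulSub_top_ne_zero
    (relIndex_sup_smulSub_pow_ne_zero ((hH hts.le).trans hsK) hK m)
    (relIndex_eq_zero_of_le_right hrest hAt)

end AddCommGroup

section Ordered

variable {G : Type*} [AddCommGroup G] [LinearOrder G] [IsOrderedAddMonoid G]

lemma isConvexSubgroup_top : IsConvexSubgroup (⊤ : AddSubgroup G) :=
  fun _ _ _ _ _ => trivial

lemma IsConvexSubgroup.of_nsmul_mem {K : AddSubgroup G} (hK : IsConvexSubgroup K)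
    {n : ℕ} (hn : n ≠ 0) {g : G} (h : n • g ∈ K) : g ∈ K := by
  refine abs_mem_iff.1 (hK _ (n • |g|) (abs_nonneg g) ?_ ?_)
  · simpa using nsmul_le_nsmul_left (abs_nonneg g) (Nat.one_le_iff_ne_zero.2 hn)
  · rwa [← abs_nsmul, abs_mem_iff]

lemma IsConvexSubgroup.total {H K : AddSubgroup G} (hH : IsConvexSubgroup H)
    (hK : IsConvexSubgroup K) : H ≤ K ∨ K ≤ H := by
  by_contra! ⟨hHK, hKH⟩
  obtain ⟨h, hhH, hhK⟩ := SetLike.not_le_iff_exists.1 hHK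
  obtain ⟨k, hkK, hkH⟩ := SetLike.not_le_iff_exists.1 hKH
  rcases le_total |h| |k| with hle | hle
  · exact hhK (abs_mem_iff.1 (hK _ _ (abs_nonneg h) hle (abs_mem_iff.2 hkK)))
  · exact hkH (abs_mem_iff.1 (hH _ _ (abs_nonneg k) hle (abs_mem_iff.2 hhH)))

lemma IsConvexSubgroup.sup_smulSub_top_inf_le {K L : AddSubgroup G} (hL : IsConvexSubgroup L)
    (hKL : K ≤ L) {n : ℕ} (hn : n ≠ 0) :
    (K ⊔ smulSub n ⊤) ⊓ L ≤ K ⊔ smulSub n L := by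
  rintro x ⟨hx, hxL⟩
  obtain ⟨c, hc, _, ⟨g, -, rfl⟩, rfl⟩ := mem_sup.1 hx
  have hg : g ∈ L := hL.of_nsmul_mem hn (by simpa using L.sub_mem hxL (hKL hc))
  exact add_mem (mem_sup_left hc) (mem_sup_right (nsmul_mem_smulSub n hg))

lemma IsConvexSubgroup.le_Hsub {n : ℕ} {a : G} {K : AddSubgroup G} (hK : IsConvexSubgroup K)
    (ha : a ∉ K ⊔ smulSub n ⊤) : K ≤ Hsub n a :=
  le_sSup ⟨hK, ha⟩

/-- The convex subgroups avoiding `a` modulo `nG` form a chain, so `a` avoids their union. -/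
lemma IsConvexSubgroup.notMem_Hsub {n : ℕ} {a : G} {K : AddSubgroup G} (hK : IsConvexSubgroup K)
    (ha : a ∉ K ⊔ smulSub n ⊤) : a ∉ Hsub n a := by
  have hdir : DirectedOn (· ≤ ·)
      {H : AddSubgroup G | IsConvexSubgroup H ∧ a ∉ H ⊔ smulSub n ⊤} := by
    intro H₁ h₁ H₂ h₂
    rcases h₁.1.total h₂.1 with h | h
    · exact ⟨H₂, h₂, h, le_rfl⟩
    · exact ⟨H₁, h₁, le_rfl, h⟩
  have hne : {H : AddSubgroup G | IsConvexSubgroup H ∧ a ∉ H ⊔ smulSub n ⊤}.Nonempty :=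
    ⟨K, hK, ha⟩
  intro hmem
  rw [Hsub, mem_sSup_of_directedOn hne hdir] at hmem
  obtain ⟨H, hH, haH⟩ := hmem
  exact hH.2 (mem_sup_left haH)

lemma zero_mem_kpWitness (p : ℕ) : 0 ∈ kpWitness G p :=
  ⟨fun _ => ⊤, fun _ _ => isConvexSubgroup_top, fun _ _ _ _ => by omega, rfl,
    fun _ _ => by omega⟩

lemma le_card_spine_of_mem_kpWitness {p n : ℕ} (hp : p ≠ 0)
    [Finite {H : AddSubgroup G | ∃ a : G, H = Hsub p a}] (hn : n ∈ kpWitness G p) :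
    n ≤ Nat.card {H : AddSubgroup G | ∃ a : G, H = Hsub p a} := by
  obtain ⟨K, hconv, hlt, -, hlayer⟩ := hn
  have hKle : ∀ i j : ℕ, i ≤ j → j ≤ n → K i ≤ K j := fun i j hij hjn =>
    hij.eq_or_lt.elim (fun h => h ▸ le_rfl) fun h => (hlt i j h hjn).le
  have hsep : ∀ i : Fin n, ∃ a ∈ K (i + 1), K i ≤ Hsub p a ∧ a ∉ Hsub p a := by
    intro i
    have hKK := hKle i (i + 1) (Nat.le_succ i) i.2
    have hnle : ¬ K (i + 1) ≤ K i ⊔ smulSub p (K (i + 1)) := fun hle => by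
      simpa [relIndex_eq_one.2 hle] using hlayer i i.2
    obtain ⟨a, haK, ha⟩ := SetLike.not_le_iff_exists.1 hnle
    have ha' : a ∉ K i ⊔ smulSub p ⊤ := fun h =>
      ha ((hconv (i + 1) i.2).sup_smulSub_top_inf_le hKK hp ⟨h, haK⟩)
    exact ⟨a, haK, (hconv i i.2.le).le_Hsub ha', (hconv i i.2.le).notMem_Hsub ha'⟩
  choose a haK hKa hna using hsep
  have hinj : Function.Injective fun i =>
      (⟨Hsub p (a i), a i, rfl⟩ : {H : AddSubgroup G | ∃ a : G, H = Hsub p a}) := by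
    refine Function.Injective.of_lt_imp_ne fun i j hij heq => hna i ?_
    rw [show Hsub p (a i) = Hsub p (a j) from congrArg Subtype.val heq]
    exact hKa j (hKle (i + 1) j hij j.2.le (haK i))
  exact (Nat.card_fin n).symm.trans_le (Nat.card_le_card_of_injective _ hinj)

lemma exists_isGreatest_kpWitness {p : ℕ} (hp : p ≠ 0)
    (hfin : {H : AddSubgroup G | ∃ a : G, H = Hsub p a}.Finite) :
    ∃ kp, IsGreatest (kpWitness G p) kp :=
  have := hfin.to_subtype
  BddAbove.exists_isGreatest_of_nonempty ⟨_, fun _ => le_card_spine_of_mem_kpWitness hp⟩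
    ⟨0, zero_mem_kpWitness p⟩

/-- The witnessing chain is `L 0 ⊊ ⋯ ⊊ L (k - 1) ⊊ G`; it is strict because the indices are
infinite and convex subgroups are comparable. -/
lemma mem_kpWitness_of_relIndex_eq_zero {p k : ℕ} (L : ℕ → AddSubgroup G)
    (hconv : ∀ i, IsConvexSubgroup (L i))
    (hlayer : ∀ i j, i < j → j ≤ k → ∀ K, L j ≤ K →
      (L i ⊔ smulSub p K).relIndex K = 0) :
    k ∈ kpWitness G p := by
  have hnle : ∀ i j, i < j → j ≤ k → ∀ K, L j ≤ K → ¬ K ≤ L i :=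
    fun i j hij hjk K hK hle => by
      simpa [relIndex_eq_one.2 (hle.trans le_sup_left)] using hlayer i j hij hjk K hK
  refine ⟨fun j => if j < k then L j else ⊤, fun i _ => ?_, fun i j hij hjk => ?_, by simp,
    fun i hi => ?_⟩
  · dsimp only
    split_ifs
    exacts [hconv i, isConvexSubgroup_top]
  · simp only [if_pos (hij.trans_le hjk)]
    split_ifs
    · exact lt_of_le_not_ge (((hconv i).total (hconv j)).resolve_right
        (hnle i j hij hjk _ le_rfl)) (hnle i j hij hjk _ le_rfl)
    · exact lt_of_le_not_ge le_top (hnle i j hij hjk ⊤ le_top)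
  · simp only [if_pos hi]
    split_ifs with h
    · exact hlayer i (i + 1) (Nat.lt_succ_self i) h.le _ le_rfl
    · exact hlayer i k hi le_rfl ⊤ le_top

lemma mem_kpWitness_of_strictMono {ι : Type*} [Preorder ι] {p : ℕ} {H : ι → AddSubgroup G}
    {e : ι → ℕ∞} (hH : Monotone H) (hconv : ∀ i, IsConvexSubgroup (H i))
    (hinf : ∀ i₀ : ι, (⨅ i, pPowSup p (H i) (e i)).relIndex
      (⨅ (i) (_ : i ≠ i₀), pPowSup p (H i) (e i)) = 0)
    {k : ℕ} {f : Fin (k + 1) → ι} (hf : StrictMono f) : k ∈ kpWitness G p := by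
  refine mem_kpWitness_of_relIndex_eq_zero (fun j => H (f (Fin.clamp j k))) (fun _ => hconv _)
    fun i j hij hjk _ hK => relIndex_sup_smulSub_eq_zero_of_lt hH hinf (hf ?_) hK
  simp [Fin.lt_def, Fin.clamp, hij, hjk, (hij.trans_le hjk).le]

end Ordered

lemma finite_and_natCard_le_of_forall_card_le {ι : Type*} {n : ℕ}
    (h : ∀ s : Finset ι, s.card ≤ n) : Finite ι ∧ Nat.card ι ≤ n := by
  have hfin : Finite ι := by
    by_contra hinf
    have := not_finite_iff_infinite.1 hinf
    obtain ⟨s, hs⟩ := Infinite.exists_subset_card_eq ι (n + 1)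
    exact absurd (h s) (by omega)
  have := Fintype.ofFinite ι
  exact ⟨hfin, by simpa [Nat.card_eq_fintype_card] using h Finset.univ⟩

/-- Let `G` be a linearly ordered abelian group with finite spines, `p` a prime,
`(H i)_{i : ι}` a strictly increasing family of convex subgroups and `(e i)_{i : ι}`
exponents in `ℕ ∪ {0, ∞}` (with `H + p^∞ G = H`) such that for every `i₀` the index
`[⋂_{i ≠ i₀} (H i + p^(e i) G) : ⋂_i (H i + p^(e i) G)]` is infinite.  Then `κ ≤ k_p + 1`
where `κ` is the cardinality of `ι` and `k_p` is the greatest element of `kpWitness G p`;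
in particular `κ` is finite. -/
theorem card_le_kp_add_one_of_infinite_relindex_family {G : Type*}
    [AddCommGroup G] [LinearOrder G] [IsOrderedAddMonoid G]
    (hfs : ∀ q : ℕ, q.Prime → {H : AddSubgroup G | ∃ a : G, H = Hsub q a}.Finite)
    (p : ℕ) (hp : p.Prime)
    {ι : Type*} [LinearOrder ι]
    (H : ι → AddSubgroup G) (hconv : ∀ i, IsConvexSubgroup (H i))
    (hchain : ∀ i j : ι, i < j → H i < H j)
    (e : ι → ℕ∞)
    (hinf : ∀ i₀ : ι,
      (⨅ i : ι, pPowSup p (H i) (e i)).relIndex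
        (⨅ (i : ι) (_ : i ≠ i₀), pPowSup p (H i) (e i)) = 0) :
    Finite ι ∧ ∃ kp : ℕ, IsGreatest (kpWitness G p) kp ∧ Nat.card ι ≤ kp + 1 := by
  obtain ⟨kp, hkp⟩ := exists_isGreatest_kpWitness hp.ne_zero (hfs p hp)
  have hH : Monotone H := StrictMono.monotone fun i j => hchain i j
  obtain ⟨hfin, hcard⟩ := finite_and_natCard_le_of_forall_card_le (n := kp + 1) fun s => by
    cases hs : s.card with
    | zero => omega
    | succ k =>
      exact Nat.succ_le_succ
        (hkp.2 (mem_kpWitness_of_strictMono hH hconv hinf (s.orderEmbOfFin hs).strictMono))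
  exact ⟨hfin, kp, hkp, hcard⟩
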